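/- For a small category C, the m-th level of the classifying diagram satisfies the strict Segal condition: N(C)_m is isomorphic to the m-fold fiber product N(C)_1 ×_{N(C)_0} ⋯ ×_{N(C)_0} N(C)_1. -/

import Mathlib

open CategoryTheory Opposite

/-- Bisimplicial sets. -/
abbrev BiSSet := (SimplexCategoryᵒᵖ × SimplexCategoryᵒᵖ) ⥤ Type

namespace BiSSet

variable (W : BiSSet)

/-- Action in the first (horizontal) simplicial direction. -/
def hmap {a b : SimplexCategory} (θ : a ⟶ b) (n : SimplexCategoryᵒᵖ)
    (x : W.obj (op b, n)) : W.obj (op a, n) :=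
  W.map ((θ.op, 𝟙 n) : ((op b, n) : SimplexCategoryᵒᵖ × SimplexCategoryᵒᵖ) ⟶ (op a, n)) x

/-- Action in the second (vertical) simplicial direction. -/
def vmap {m n : SimplexCategory} (θ : m ⟶ n) (a : SimplexCategoryᵒᵖ)
    (x : W.obj (a, op n)) : W.obj (a, op m) :=
  W.map ((𝟙 a, θ.op) : ((a, op n) : SimplexCategoryᵒᵖ × SimplexCategoryᵒᵖ) ⟶ (a, op m)) x

lemma hmap_hmap {a b c : SimplexCategory} (θ : a ⟶ b) (η : b ⟶ c) (n : SimplexCategoryᵒᵖ)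
    (x : W.obj (op c, n)) : W.hmap θ n (W.hmap η n x) = W.hmap (θ ≫ η) n x := by
  dsimp [hmap]
  rw [← FunctorToTypes.map_comp_apply]
  rfl

/-- The set of "k-simplices of objects": the points of the `k`-th space. -/
abbrev Pt (k : ℕ) : Type := W.obj (op (SimplexCategory.mk k), op (SimplexCategory.mk 0))

/-- The source of a point of `W₁`. -/
def src (f : W.Pt 1) : W.Pt 0 := W.hmap (SimplexCategory.δ 1) _ f

/-- The target of a point of `W₁`. -/
def tgt (f : W.Pt 1) : W.Pt 0 := W.hmap (SimplexCategory.δ 0) _ f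

/-- The identity map of an object `x`, i.e. `s₀ x`. -/
def hid (x : W.Pt 0) : W.Pt 1 := W.hmap (SimplexCategory.σ 0) _ x

lemma src_hid (x : W.Pt 0) : W.src (W.hid x) = x := by
  dsimp [src, hid]
  rw [W.hmap_hmap]
  have : (SimplexCategory.δ 1 ≫ SimplexCategory.σ 0 :
      SimplexCategory.mk 0 ⟶ SimplexCategory.mk 0) = 𝟙 _ := by
    apply SimplexCategory.Hom.ext
    apply OrderHom.ext
    funext j
    exact @Subsingleton.elim (Fin 1) _ _ _
  rw [this]
  exact FunctorToTypes.map_id_apply W x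

lemma tgt_hid (x : W.Pt 0) : W.tgt (W.hid x) = x := by
  dsimp [tgt, hid]
  rw [W.hmap_hmap]
  have : (SimplexCategory.δ 0 ≫ SimplexCategory.σ 0 :
      SimplexCategory.mk 0 ⟶ SimplexCategory.mk 0) = 𝟙 _ := by
    apply SimplexCategory.Hom.ext
    apply OrderHom.ext
    funext j
    exact @Subsingleton.elim (Fin 1) _ _ _
  rw [this]
  exact FunctorToTypes.map_id_apply W x

/-- One step of a homotopy between points `f g` of `map(x,y) ⊆ W₁`:
a vertical `1`-simplex of `W₁` lying in the fiber over `(x,y)`. -/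
def HtpyStep (x y : W.Pt 0) (f g : W.Pt 1) : Prop :=
  ∃ e : W.obj (op (SimplexCategory.mk 1), op (SimplexCategory.mk 1)),
    W.vmap (SimplexCategory.δ 1) _ e = f ∧ W.vmap (SimplexCategory.δ 0) _ e = g ∧
    W.hmap (SimplexCategory.δ 1) _ e = W.vmap (SimplexCategory.σ 0) _ x ∧
    W.hmap (SimplexCategory.δ 0) _ e = W.vmap (SimplexCategory.σ 0) _ y

/-- `f` and `g` lie in the same path component of the mapping space `map(x,y)`. -/
def Homotopic (x y : W.Pt 0) (f g : W.Pt 1) : Prop :=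
  Relation.EqvGen (W.HtpyStep x y) f g

/-- `c` is a result of a composition of `f` (first) and `g` (second): there is a
point `k` of `W₂` lifting `(g,f)` along the Segal map `φ₂ = (d₂, d₀)`, with `d₁ k = c`. -/
def IsComposite (f g c : W.Pt 1) : Prop :=
  ∃ k : W.Pt 2,
    W.hmap (SimplexCategory.δ 2) _ k = f ∧
    W.hmap (SimplexCategory.δ 0) _ k = g ∧
    W.hmap (SimplexCategory.δ 1) _ k = c

/-- The `k`-th row of a bisimplicial set, a simplicial set. -/
def row (k : SimplexCategory) : SSet := (Functor.curry.obj W).obj (op k)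

/-- The simplicial map between rows induced by a morphism of `SimplexCategory`. -/
def rowMap {a b : SimplexCategory} (θ : a ⟶ b) : W.row b ⟶ W.row a :=
  (Functor.curry.obj W).map θ.op

lemma rowMap_rowMap {a b c : SimplexCategory} (θ : a ⟶ b) (η : b ⟶ c)
    (n : SimplexCategoryᵒᵖ) (x : (W.row c).obj n) :
    (W.rowMap θ).app n ((W.rowMap η).app n x) = (W.rowMap (θ ≫ η)).app n x := by
  dsimp [rowMap]
  erw [← FunctorToTypes.map_comp_apply]
  rfl

/-- The map `[1] → [k]` hitting `i` and `i+1`. -/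
def arrowHom (k : ℕ) (i : Fin k) : SimplexCategory.mk 1 ⟶ SimplexCategory.mk k :=
  SimplexCategory.mkHom
    ⟨fun j => ⟨(i : ℕ) + (j : ℕ), by omega⟩, by
      intro a b hab
      simp only [Fin.mk_le_mk]
      omega⟩

/-- The target of the `k`-th Segal map: the `k`-fold fiber product
`W₁ ×_{W₀} ⋯ ×_{W₀} W₁`, as a simplicial set. -/
def segalTarget (k : ℕ) : SSet where
  obj n :=
    { f : Fin k → (W.row (SimplexCategory.mk 1)).obj n //
      ∀ (i : Fin k) (h : (i : ℕ) + 1 < k),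
        (W.rowMap (SimplexCategory.δ 0)).app n (f i) =
        (W.rowMap (SimplexCategory.δ 1)).app n (f ⟨(i : ℕ) + 1, h⟩) }
  map {n n'} g := TypeCat.ofHom fun x =>
    ⟨fun i => (W.row (SimplexCategory.mk 1)).map g (x.1 i), by
      intro i h
      rw [FunctorToTypes.naturality, FunctorToTypes.naturality, x.2 i h]⟩
  map_id n := by
    refine ConcreteCategory.hom_ext _ _ (fun x => ?_)
    apply Subtype.ext
    funext i
    exact ConcreteCategory.congr_hom ((W.row (SimplexCategory.mk 1)).map_id n) (x.1 i)
  map_comp {n n' n''} g g' := by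
    refine ConcreteCategory.hom_ext _ _ (fun x => ?_)
    apply Subtype.ext
    funext i
    exact ConcreteCategory.congr_hom ((W.row (SimplexCategory.mk 1)).map_comp g g') (x.1 i)

lemma arrowHom_comp_zero (k : ℕ) (i : Fin k) (h : (i : ℕ) + 1 < k) :
    (SimplexCategory.δ 0 ≫ arrowHom k i : SimplexCategory.mk 0 ⟶ SimplexCategory.mk k) =
    SimplexCategory.δ 1 ≫ arrowHom k ⟨(i : ℕ) + 1, h⟩ := by
  apply SimplexCategory.Hom.ext
  apply OrderHom.ext
  funext j
  have hj : j = 0 := @Subsingleton.elim (Fin 1) _ _ _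
  subst hj
  apply Fin.ext
  simp [SimplexCategory.δ, arrowHom, Fin.succAbove]
  rfl

/-- The `k`-th Segal map `φ_k : W_k → W₁ ×_{W₀} ⋯ ×_{W₀} W₁`. -/
def segalMap (k : ℕ) : W.row (SimplexCategory.mk k) ⟶ W.segalTarget k where
  app n := TypeCat.ofHom fun x =>
    ⟨fun i => (W.rowMap (arrowHom k i)).app n x, by
      intro i h
      rw [W.rowMap_rowMap, W.rowMap_rowMap, arrowHom_comp_zero k i h]⟩
  naturality {n n'} g := by
    ext x
    apply Subtype.ext
    funext i
    show (W.rowMap (arrowHom k i)).app n' ((W.row (SimplexCategory.mk k)).map g x) =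
      (W.row (SimplexCategory.mk 1)).map g ((W.rowMap (arrowHom k i)).app n x)
    exact NatTrans.naturality_apply (W.rowMap (arrowHom k i)) g x

/-- A Segal space (in the operative sense used throughout): the Segal maps `φ_k`, `k ≥ 2`,
are trivial fibrations of simplicial sets, i.e. have the right lifting property with respect
to all boundary inclusions `∂Δ[n] → Δ[n]`. -/
def IsSegal : Prop :=
  ∀ (k : ℕ), 2 ≤ k → ∀ (n : ℕ),
    HasLiftingProperty (SSet.boundary n).ι (W.segalMap k)

end BiSSet

open CategoryTheory Opposite

/-- `Chaotic α` is the groupoid with objects `α` and a unique morphism (necessarily an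
isomorphism) between any two objects; `Chaotic (Fin (n+1))` is the groupoid `I[n]`. -/
def Chaotic (α : Type) : Type := α

instance (α : Type) : Groupoid (Chaotic α) where
  Hom _ _ := PUnit
  id _ := ⟨⟩
  comp _ _ := ⟨⟩
  inv _ := ⟨⟩

instance (α : Type) (a b : Chaotic α) : Subsingleton (a ⟶ b) := ⟨fun _ _ => rfl⟩

/-- A functor of chaotic groupoids from a map of underlying types. -/
def chaoticFunctor {α β : Type} (f : α → β) : Chaotic α ⥤ Chaotic β where
  obj := f
  map _ := ⟨⟩

/-- The indexing category `[m] × I[n]` associated to an object of `Δᵒᵖ × Δᵒᵖ`. -/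
def classIndex (p : SimplexCategoryᵒᵖ × SimplexCategoryᵒᵖ) : Type :=
  Fin (p.1.unop.len + 1) × Chaotic (Fin (p.2.unop.len + 1))

instance (p : SimplexCategoryᵒᵖ × SimplexCategoryᵒᵖ) : Category (classIndex p) :=
  inferInstanceAs (Category (Fin (p.1.unop.len + 1) × Chaotic (Fin (p.2.unop.len + 1))))

instance (p : SimplexCategoryᵒᵖ × SimplexCategoryᵒᵖ) (a b : classIndex p) :
    Subsingleton (a ⟶ b) :=
  inferInstanceAs (Subsingleton ((_ ⟶ _) × (_ ⟶ _)))

/-- The functor `[m'] × I[n'] ⥤ [m] × I[n]` induced by a morphism of `Δᵒᵖ × Δᵒᵖ`. -/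
def classIndexMap {p q : SimplexCategoryᵒᵖ × SimplexCategoryᵒᵖ} (g : p ⟶ q) :
    classIndex q ⥤ classIndex p :=
  (g.1.unop.toOrderHom.monotone.functor).prod (chaoticFunctor g.2.unop.toOrderHom)

/-- The classifying diagram `N C` of a category `C`: the bisimplicial set whose
`(m,n)`-bisimplices are the functors `[m] × I[n] ⥤ C`. -/
def classDiag (C : Type) [Category C] : BiSSet where
  obj p := classIndex p ⥤ C
  map {p q} g := TypeCat.ofHom fun F => classIndexMap g ⋙ F
  map_id p := by
    ext F
    change classIndexMap (𝟙 p) ⋙ F = F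
    have : classIndexMap (𝟙 p) = 𝟭 (classIndex p) :=
      CategoryTheory.Functor.ext (fun X => rfl) (fun X Y f => Subsingleton.elim _ _)
    rw [this, Functor.id_comp]
  map_comp {p q r} g h := by
    ext F
    change classIndexMap (g ≫ h) ⋙ F = classIndexMap h ⋙ (classIndexMap g ⋙ F)
    have : classIndexMap (g ≫ h) = classIndexMap h ⋙ classIndexMap g :=
      CategoryTheory.Functor.ext (fun X => rfl) (fun X Y f => Subsingleton.elim _ _)
    rw [this, Functor.assoc]

set_option linter.unusedVariables false
set_option maxHeartbeats 1000000

namespace ClassSegalAux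
open CategoryTheory Opposite

abbrev Ch (N : ℕ) : Type := Chaotic (Fin (N+1))
abbrev PC (k N : ℕ) : Type := Fin (k+1) × Ch N

instance {α : Type} [Preorder α] (a b : α) : Subsingleton (a ⟶ b) :=
  ⟨fun ⟨⟨_⟩⟩ ⟨⟨_⟩⟩ => rfl⟩

instance (k N : ℕ) (X Y : PC k N) : Subsingleton (X ⟶ Y) :=
  inferInstanceAs (Subsingleton ((_ ⟶ _) × (_ ⟶ _)))

/-- vertex inclusion functor -/
def vert {k N : ℕ} (j : Fin (k+1)) : Ch N ⥤ PC k N where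
  obj a := (j, a)
  map φ := (𝟙 j, φ)
  map_comp _ _ := Subsingleton.elim _ _

/-- unitless form of the arrow functor -/
def AA {N : ℕ} (m : ℕ) (i : Fin m) : PC 1 N ⥤ PC m N where
  obj x := (⟨(i:ℕ) + (x.1:ℕ), by omega⟩, x.2)
  map {x y} u := (homOfLE (by
    have : (x.1 : ℕ) ≤ (y.1 : ℕ) := leOfHom u.1
    simp only [Fin.mk_le_mk]
    omega), u.2)
  map_id _ := Subsingleton.elim _ _
  map_comp _ _ := Subsingleton.elim _ _

def A (m : ℕ) (n : SimplexCategoryᵒᵖ) (i : Fin m) : PC 1 n.unop.len ⥤ PC m n.unop.len :=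
  classIndexMap (show ((op (SimplexCategory.mk m), n) : SimplexCategoryᵒᵖ × SimplexCategoryᵒᵖ) ⟶
    (op (SimplexCategory.mk 1), n) from ((BiSSet.arrowHom m i).op, 𝟙 n))

lemma A_eq (m : ℕ) (n : SimplexCategoryᵒᵖ) (i : Fin m) : A m n i = AA m i :=
  CategoryTheory.Functor.ext (fun x => rfl) (fun _ _ _ => Subsingleton.elim _ _)

def B (n : SimplexCategoryᵒᵖ) (k : Fin 2) : PC 0 n.unop.len ⥤ PC 1 n.unop.len :=
  classIndexMap (show ((op (SimplexCategory.mk 1), n) : SimplexCategoryᵒᵖ × SimplexCategoryᵒᵖ) ⟶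
    (op (SimplexCategory.mk 0), n) from ((SimplexCategory.δ k).op, 𝟙 n))

lemma vert_comp_B0 (n : SimplexCategoryᵒᵖ) :
    (vert (0 : Fin 1) ⋙ B n 0 : Ch n.unop.len ⥤ PC 1 n.unop.len) = vert 1 :=
  CategoryTheory.Functor.ext (fun a => rfl) (fun _ _ _ => Subsingleton.elim _ _)

lemma vert_comp_B1 (n : SimplexCategoryᵒᵖ) :
    (vert (0 : Fin 1) ⋙ B n 1 : Ch n.unop.len ⥤ PC 1 n.unop.len) = vert 0 :=
  CategoryTheory.Functor.ext (fun a => rfl) (fun _ _ _ => Subsingleton.elim _ _)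

/-- transfer a conjugation fact along equalities of objects, in a category with
subsingleton homs -/
lemma conj_transfer {D : Type} [Category.{0} D] {E : Type} [Category.{0} E]
    [∀ X Y : D, Subsingleton (X ⟶ Y)]
    {F F' : D ⥤ E} {X' Y' X Y : D} (e₁ : X' = X) (e₂ : Y' = Y)
    (v : X' ⟶ Y') (h₁' : F.obj X' = F'.obj X') (h₂' : F.obj Y' = F'.obj Y')
    (hv : F.map v = eqToHom h₁' ≫ F'.map v ≫ eqToHom h₂'.symm)
    (u : X ⟶ Y) (h₁ : F.obj X = F'.obj X) (h₂ : F.obj Y = F'.obj Y) :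
    F.map u = eqToHom h₁ ≫ F'.map u ≫ eqToHom h₂.symm := by
  subst e₁; subst e₂
  rwa [Subsingleton.elim u v]

/-- morphism decomposition: it suffices to check conjugation on vertical and
horizontal generators -/
lemma map_ext_gen {C : Type} [Category.{0} C] {k N : ℕ} (F F' : PC k N ⥤ C)
    (hobj : ∀ X, F.obj X = F'.obj X)
    (hvert : ∀ (j : Fin (k+1)) (a b : Ch N) (u : ((j,a) : PC k N) ⟶ (j,b)),
        F.map u = eqToHom (hobj _) ≫ F'.map u ≫ eqToHom (hobj _).symm)
    (hhor : ∀ (i : Fin k) (b : Ch N) (u : ((i.castSucc, b) : PC k N) ⟶ (i.succ, b)),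
        F.map u = eqToHom (hobj _) ≫ F'.map u ≫ eqToHom (hobj _).symm) :
    ∀ (X Y : PC k N) (u : X ⟶ Y),
      F.map u = eqToHom (hobj X) ≫ F'.map u ≫ eqToHom (hobj Y).symm := by
  suffices h : ∀ (d : ℕ) (X Y : PC k N), ((Y.1 : ℕ) - (X.1 : ℕ) ≤ d) → ∀ (u : X ⟶ Y),
      F.map u = eqToHom (hobj X) ≫ F'.map u ≫ eqToHom (hobj Y).symm by
    exact fun X Y u => h ((Y.1 : ℕ) - (X.1 : ℕ)) X Y le_rfl u
  intro d
  induction d with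
  | zero =>
    rintro ⟨j, a⟩ ⟨j', b⟩ hd u
    have hle : (j : ℕ) ≤ (j' : ℕ) := leOfHom u.1
    have hd2 : (j' : ℕ) - (j : ℕ) ≤ 0 := hd
    have hjj : j = j' := Fin.ext (by omega)
    subst hjj
    exact hvert j a b u
  | succ d ih =>
    rintro ⟨j, a⟩ ⟨j', b⟩ hd u
    have hle : (j : ℕ) ≤ (j' : ℕ) := leOfHom u.1
    have hd2 : (j' : ℕ) - (j : ℕ) ≤ d + 1 := hd
    by_cases hc : (j' : ℕ) ≤ (j : ℕ)
    · have hjj : j = j' := Fin.ext (by omega)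
      subst hjj
      exact hvert j a b u
    · have h1 : (j' : ℕ) - 1 < k := by have := j'.isLt; omega
      set i : Fin k := ⟨(j' : ℕ) - 1, h1⟩ with hi
      have hj' : (i.succ, b) = ((j', b) : PC k N) := by
        refine congrArg (fun z => (z, b)) (Fin.ext ?_)
        show (j' : ℕ) - 1 + 1 = (j' : ℕ)
        omega
      have hjc : j ≤ i.castSucc := by
        rw [Fin.le_def]
        show (j : ℕ) ≤ (j' : ℕ) - 1
        omega
      have hu : u = (((homOfLE hjc, u.2) : ((j, a) : PC k N) ⟶ (i.castSucc, b)) ≫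
          ((homOfLE (Fin.castSucc_le_succ i), 𝟙 b) :
            ((i.castSucc, b) : PC k N) ⟶ (i.succ, b))) ≫ eqToHom hj' :=
        Subsingleton.elim _ _
      rw [hu, F.map_comp, F'.map_comp, F.map_comp, F'.map_comp]
      rw [ih (j, a) (i.castSucc, b) (show (j' : ℕ) - 1 - (j : ℕ) ≤ d by omega) _]
      rw [hhor i b _]
      simp [eqToHom_map]

section Construct

variable {C : Type} [Category.{0} C] {m N : ℕ}
variable (hm : 1 ≤ m) (f : Fin m → (PC 1 N ⥤ C))

def vObj (j : Fin (m+1)) : Ch N ⥤ C :=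
  if h : (j : ℕ) < m then vert 0 ⋙ f ⟨j, h⟩ else vert 1 ⋙ f ⟨m-1, by omega⟩

lemma vObj_lt (j : Fin (m+1)) (h : (j:ℕ) < m) :
    vObj hm f j = vert 0 ⋙ f ⟨j, h⟩ := dif_pos h

lemma vObj_last (j : Fin (m+1)) (h : ¬ (j:ℕ) < m) :
    vObj hm f j = vert 1 ⋙ f ⟨m-1, by omega⟩ := dif_neg h

variable (hcomp : ∀ (i : Fin m) (h : (i:ℕ)+1 < m),
  (vert 1 ⋙ f i : Ch N ⥤ C) = vert 0 ⋙ f ⟨(i:ℕ)+1, h⟩)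

include hm

include hcomp in
lemma vObj_succ_eq (i : Fin m) (j : Fin (m+1)) (hj : (j:ℕ) = (i:ℕ)+1) :
    vObj hm f j = vert 1 ⋙ f i := by
  by_cases h : (j:ℕ) < m
  · rw [vObj_lt hm f j h]
    have he : (⟨(j:ℕ), h⟩ : Fin m) = ⟨(i:ℕ)+1, by omega⟩ := Fin.ext hj
    rw [he]
    exact (hcomp i (by omega)).symm
  · rw [vObj_last hm f j h]
    have hjlt := j.isLt
    have he : (⟨m-1, by omega⟩ : Fin m) = i := Fin.ext (show m - 1 = (i:ℕ) by omega)
    rw [he]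

lemma vObj_castSucc (i : Fin m) : vObj hm f i.castSucc = vert 0 ⋙ f i :=
  vObj_lt hm f i.castSucc i.isLt

include hcomp in
lemma vObj_succ (i : Fin m) : vObj hm f i.succ = vert 1 ⋙ f i :=
  vObj_succ_eq hm f hcomp i i.succ rfl

lemma vObj_mk0 (i : Fin m) (h : (i:ℕ) < m + 1) :
    vObj hm f ⟨(i:ℕ), h⟩ = vert 0 ⋙ f i :=
  vObj_lt hm f _ i.isLt

include hcomp in
lemma vObj_mk1 (i : Fin m) (h : (i:ℕ)+1 < m + 1) :
    vObj hm f ⟨(i:ℕ)+1, h⟩ = vert 1 ⋙ f i :=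
  vObj_succ_eq hm f hcomp i _ rfl

def stepNT (g : PC 1 N ⥤ C) : (vert (0 : Fin 2) ⋙ g : Ch N ⥤ C) ⟶ (vert 1 ⋙ g) where
  app a := g.map ((homOfLE (show (0 : Fin 2) ≤ 1 by decide), 𝟙 a) : ((0, a) : PC 1 N) ⟶ (1, a))
  naturality a b φ := by
    dsimp [vert]
    rw [← g.map_comp, ← g.map_comp]
    exact congrArg g.map (Subsingleton.elim _ _)

include hcomp in
def mapSucc (i : Fin m) : vObj hm f i.castSucc ⟶ vObj hm f i.succ :=
  eqToHom (vObj_castSucc hm f i) ≫ stepNT (f i) ≫ eqToHom (vObj_succ hm f hcomp i).symm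

include hcomp in
noncomputable def G : Fin (m+1) ⥤ (Ch N ⥤ C) :=
  ComposableArrows.mkOfObjOfMapSucc (vObj hm f) (mapSucc hm f hcomp)

include hcomp in
lemma G_obj (j : Fin (m+1)) : (G hm f hcomp).obj j = vObj hm f j := rfl

include hcomp in
noncomputable def RF : PC m N ⥤ C := Functor.uncurry.obj (G hm f hcomp)

include hcomp in
lemma RF_obj (j : Fin (m+1)) (a : Ch N) :
    (RF hm f hcomp).obj (j, a) = (vObj hm f j).obj a := rfl

include hcomp in
lemma RF_map_vert (j : Fin (m+1)) (a b : Ch N) (u : ((j,a) : PC m N) ⟶ (j,b)) :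
    (RF hm f hcomp).map u = (vObj hm f j).map u.2 := by
  show ((G hm f hcomp).map u.1).app a ≫ ((G hm f hcomp).obj j).map u.2 = _
  rw [Subsingleton.elim u.1 (𝟙 j), (G hm f hcomp).map_id]
  simp
  rfl

include hcomp in
lemma RF_map_hor (i : Fin m) (b : Ch N) (u : ((i.castSucc, b) : PC m N) ⟶ (i.succ, b)) :
    (RF hm f hcomp).map u =
      eqToHom (Functor.congr_obj (vObj_castSucc hm f i) b) ≫
      (f i).map ((homOfLE (show (0 : Fin 2) ≤ 1 by decide), 𝟙 b) : ((0, b) : PC 1 N) ⟶ (1, b)) ≫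
      eqToHom (Functor.congr_obj (vObj_succ hm f hcomp i) b).symm := by
  show ((G hm f hcomp).map u.1).app b ≫ ((G hm f hcomp).obj i.succ).map u.2 = _
  have hms : (G hm f hcomp).map u.1 = mapSucc hm f hcomp i := by
    rw [Subsingleton.elim u.1 (homOfLE (Fin.castSucc_le_succ i))]
    exact ComposableArrows.mkOfObjOfMapSucc_map_succ (vObj hm f) (mapSucc hm f hcomp)
      (i : ℕ) i.isLt
  rw [hms]
  rw [Subsingleton.elim u.2 (𝟙 b), ((G hm f hcomp).obj i.succ).map_id, Category.comp_id]
  simp [mapSucc, stepNT, eqToHom_app]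
  rfl

include hcomp in
lemma AA_comp_RF (i : Fin m) : AA m i ⋙ RF hm f hcomp = f i := by
  have hobj : ∀ x : PC 1 N, (AA m i ⋙ RF hm f hcomp).obj x = (f i).obj x := by
    rintro ⟨⟨jv, hjv⟩, a⟩
    interval_cases jv
    · exact Functor.congr_obj (vObj_mk0 hm f i (by omega)) a
    · exact Functor.congr_obj (vObj_mk1 hm f hcomp i (by omega)) a
  refine CategoryTheory.Functor.ext hobj ?_
  intro X Y u
  refine map_ext_gen (AA m i ⋙ RF hm f hcomp) (f i) hobj ?_ ?_ X Y u
  · rintro ⟨jv, hjv⟩ a b u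
    interval_cases jv
    · have e1 : (AA m i ⋙ RF hm f hcomp).map u
          = (vObj hm f ⟨(i:ℕ), by omega⟩).map u.2 :=
        RF_map_vert hm f hcomp ⟨(i:ℕ), by omega⟩ a b ((AA m i).map u)
      rw [e1]
      have h2 := Functor.congr_hom (vObj_mk0 hm f i (by omega)) u.2
      rw [h2]
      have h3 : (vert (0 : Fin 2) ⋙ f i).map u.2 = (f i).map u :=
        congrArg (f i).map (Subsingleton.elim _ _)
      rw [h3]
      rfl
    · have e1 : (AA m i ⋙ RF hm f hcomp).map u
          = (vObj hm f ⟨(i:ℕ)+1, by omega⟩).map u.2 :=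
        RF_map_vert hm f hcomp ⟨(i:ℕ)+1, by omega⟩ a b ((AA m i).map u)
      rw [e1]
      have h2 := Functor.congr_hom (vObj_mk1 hm f hcomp i (by omega)) u.2
      rw [h2]
      have h3 : (vert (1 : Fin 2) ⋙ f i).map u.2 = (f i).map u :=
        congrArg (f i).map (Subsingleton.elim _ _)
      rw [h3]
      rfl
  · rintro ⟨iv, hiv⟩ b u
    interval_cases iv
    have e1 := RF_map_hor hm f hcomp i b ((AA m i).map u)
    have e2 : (AA m i ⋙ RF hm f hcomp).map u = (RF hm f hcomp).map ((AA m i).map u) := rfl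
    rw [e2]; refine e1.trans ?_
    have h3 : (f i).map ((homOfLE (show (0 : Fin 2) ≤ 1 by decide), 𝟙 b) : ((0, b) : PC 1 N) ⟶ (1, b))
        = (f i).map u := congrArg (f i).map (Subsingleton.elim _ _)
    exact congrArg (fun t => eqToHom _ ≫ t ≫ eqToHom _) h3

end Construct

lemma inj_aux {C : Type} [Category.{0} C] {m N : ℕ} (hm : 1 ≤ m) (F F' : PC m N ⥤ C)
    (hA : ∀ i : Fin m, AA m i ⋙ F = AA m i ⋙ F') : F = F' := by
  have hobj : ∀ X : PC m N, F.obj X = F'.obj X := by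
    rintro ⟨j, a⟩
    by_cases h : (j : ℕ) < m
    · exact Functor.congr_obj (hA ⟨j, h⟩) ((0 : Fin 2), a)
    · have hjlt := j.isLt
      have hj : j = ⟨(m-1)+1, by omega⟩ := Fin.ext (show (j:ℕ) = (m-1)+1 by omega)
      rw [hj]
      exact Functor.congr_obj (hA ⟨m-1, by omega⟩) ((1 : Fin 2), a)
  refine CategoryTheory.Functor.ext hobj ?_
  intro X Y u
  refine map_ext_gen F F' hobj ?_ ?_ X Y u
  · intro j a b u
    by_cases h : (j : ℕ) < m
    · have hv := Functor.congr_hom (hA ⟨j, h⟩)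
        ((𝟙 (0 : Fin 2), u.2) : ((0, a) : PC 1 N) ⟶ (0, b))
      rw [Subsingleton.elim u
        ((AA m ⟨j, h⟩).map ((𝟙 (0 : Fin 2), u.2) : ((0, a) : PC 1 N) ⟶ (0, b)))]
      exact hv
    · have hjlt := j.isLt
      have hj : j = ⟨(m-1)+1, by omega⟩ := Fin.ext (show (j:ℕ) = (m-1)+1 by omega)
      have hv := Functor.congr_hom (hA ⟨m-1, by omega⟩)
        ((𝟙 (1 : Fin 2), u.2) : ((1, a) : PC 1 N) ⟶ (1, b))
      exact conj_transfer (congrArg (fun z => ((z, a) : PC m N)) hj.symm)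
        (congrArg (fun z => ((z, b) : PC m N)) hj.symm)
        ((AA m ⟨m-1, by omega⟩).map ((𝟙 (1 : Fin 2), u.2) : ((1, a) : PC 1 N) ⟶ (1, b)))
        (hobj _) (hobj _) hv u (hobj _) (hobj _)
  · intro i b u
    have hv := Functor.congr_hom (hA i)
      ((homOfLE (show (0 : Fin 2) ≤ 1 by decide), 𝟙 b) : ((0, b) : PC 1 N) ⟶ (1, b))
    rw [Subsingleton.elim u
      ((AA m i).map ((homOfLE (show (0 : Fin 2) ≤ 1 by decide), 𝟙 b) : ((0, b) : PC 1 N) ⟶ (1, b)))]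
    exact hv

end ClassSegalAux

open BiSSet in
/-- For a small category `C`, the classifying diagram satisfies the strict Segal
condition: for `m ≥ 1` the Segal map `N(C)_m ⟶ N(C)₁ ×_{N(C)₀} ⋯ ×_{N(C)₀} N(C)₁`
is an isomorphism of simplicial sets. -/
theorem classDiag_strict_segal (C : Type) [Category.{0} C] :
    ∀ m : ℕ, 1 ≤ m → IsIso ((classDiag C).segalMap m) := by
  intro m hm
  haveI key : ∀ n : SimplexCategoryᵒᵖ, IsIso (((classDiag C).segalMap m).app n) := by
    intro n
    rw [CategoryTheory.isIso_iff_bijective]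
    constructor
    · intro F F' h
      have hA : ∀ i : Fin m,
          ClassSegalAux.AA m i ⋙ (F : ClassSegalAux.PC m n.unop.len ⥤ C)
            = ClassSegalAux.AA m i ⋙ (F' : ClassSegalAux.PC m n.unop.len ⥤ C) := by
        intro i
        have h1 := congrFun (congrArg Subtype.val h) i
        have h2 : ClassSegalAux.A m n i ⋙ (F : ClassSegalAux.PC m n.unop.len ⥤ C)
            = ClassSegalAux.A m n i ⋙ (F' : ClassSegalAux.PC m n.unop.len ⥤ C) := h1
        rw [ClassSegalAux.A_eq] at h2
        exact h2
      exact ClassSegalAux.inj_aux hm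
        (F : ClassSegalAux.PC m n.unop.len ⥤ C)
        (F' : ClassSegalAux.PC m n.unop.len ⥤ C) hA
    · rintro ⟨f, hf⟩
      have hcomp : ∀ (i : Fin m) (h : (i:ℕ)+1 < m),
          (ClassSegalAux.vert 1 ⋙ (f i : ClassSegalAux.PC 1 n.unop.len ⥤ C) :
              ClassSegalAux.Ch n.unop.len ⥤ C)
            = ClassSegalAux.vert 0 ⋙
              (f ⟨(i:ℕ)+1, h⟩ : ClassSegalAux.PC 1 n.unop.len ⥤ C) := by
        intro i h
        have h1 : ClassSegalAux.B n 0 ⋙ (f i : ClassSegalAux.PC 1 n.unop.len ⥤ C)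
            = ClassSegalAux.B n 1 ⋙
              (f ⟨(i:ℕ)+1, h⟩ : ClassSegalAux.PC 1 n.unop.len ⥤ C) := hf i h
        calc (ClassSegalAux.vert 1 ⋙ (f i : ClassSegalAux.PC 1 n.unop.len ⥤ C) :
                ClassSegalAux.Ch n.unop.len ⥤ C)
            = (ClassSegalAux.vert 0 ⋙ ClassSegalAux.B n 0) ⋙
                (f i : ClassSegalAux.PC 1 n.unop.len ⥤ C) := by
              rw [ClassSegalAux.vert_comp_B0]
          _ = ClassSegalAux.vert 0 ⋙ (ClassSegalAux.B n 0 ⋙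
                (f i : ClassSegalAux.PC 1 n.unop.len ⥤ C)) := Functor.assoc _ _ _
          _ = ClassSegalAux.vert 0 ⋙ (ClassSegalAux.B n 1 ⋙
                (f ⟨(i:ℕ)+1, h⟩ : ClassSegalAux.PC 1 n.unop.len ⥤ C)) := by rw [h1]
          _ = (ClassSegalAux.vert 0 ⋙ ClassSegalAux.B n 1) ⋙
                (f ⟨(i:ℕ)+1, h⟩ : ClassSegalAux.PC 1 n.unop.len ⥤ C) :=
              (Functor.assoc _ _ _).symm
          _ = ClassSegalAux.vert 0 ⋙
                (f ⟨(i:ℕ)+1, h⟩ : ClassSegalAux.PC 1 n.unop.len ⥤ C) := by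
              rw [ClassSegalAux.vert_comp_B1]
      refine ⟨ClassSegalAux.RF hm
        (f : Fin m → (ClassSegalAux.PC 1 n.unop.len ⥤ C)) hcomp, ?_⟩
      apply Subtype.ext
      funext i
      have e := ClassSegalAux.AA_comp_RF hm
        (f : Fin m → (ClassSegalAux.PC 1 n.unop.len ⥤ C)) hcomp i
      rw [← ClassSegalAux.A_eq m n i] at e
      exact e
  exact NatIso.isIso_of_isIso_app _
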